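/- If M is an integrable mean function and 0 < a < b, then (2/3)·A(a,b) < I_M(a,b) < (4/3)·A(a,b), where A(a,b) = (a+b)/2 and I_M(a,b) = (1/(b−a)²)·∫ₐᵇ∫ₐᵇ M(x,y) dx dy. -/

import Mathlib

/-!
On `[a, b]²` the mean lies between `min` and `max`, so `I_M` lies between `I_min = (2a + b)/3` and
`I_max = (a + 2b)/3`. Since `a > 0`, these are strictly larger than
`(2/3)·A(a, b) = (a + b)/3` and strictly smaller than `(4/3)·A(a, b) = 2(a + b)/3` respectively.
-/

open MeasureTheory intervalIntegral

theorem integral_integral_mono_on {f g : ℝ → ℝ → ℝ} {a b : ℝ} (hab : a ≤ b)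
    (hf : ∀ x ∈ Set.Icc a b, IntervalIntegrable (f x) volume a b)
    (hg : ∀ x ∈ Set.Icc a b, IntervalIntegrable (g x) volume a b)
    (hf' : IntervalIntegrable (fun x => ∫ y in a..b, f x y) volume a b)
    (hg' : IntervalIntegrable (fun x => ∫ y in a..b, g x y) volume a b)
    (hfg : ∀ x ∈ Set.Icc a b, ∀ y ∈ Set.Icc a b, f x y ≤ g x y) :
    ∫ x in a..b, ∫ y in a..b, f x y ≤ ∫ x in a..b, ∫ y in a..b, g x y :=
  integral_mono_on hab hf' hg' fun x hx => integral_mono_on hab (hf x hx) (hg x hx) (hfg x hx)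

theorem intervalIntegrable_integral_of_continuous {f : ℝ → ℝ → ℝ}
    (hf : Continuous (Function.uncurry f)) (a b : ℝ) :
    IntervalIntegrable (fun x => ∫ y in a..b, f x y) volume a b :=
  (continuous_parametric_intervalIntegral_of_continuous' hf a b).intervalIntegrable _ _

theorem integral_min_left {a b x : ℝ} (hax : a ≤ x) (hxb : x ≤ b) :
    ∫ y in a..b, min x y = (x ^ 2 - a ^ 2) / 2 + x * (b - x) := by
  have hcont : Continuous fun y => min x y := continuous_const.min continuous_id
  rw [← integral_add_adjacent_intervals (hcont.intervalIntegrable a x)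
    (hcont.intervalIntegrable x b)]
  have below : ∫ y in a..x, min x y = ∫ y in a..x, y := by
    refine integral_congr fun y hy => min_eq_right ?_
    exact (Set.uIcc_of_le hax ▸ hy).2
  have above : ∫ y in x..b, min x y = ∫ y in x..b, x := by
    refine integral_congr fun y hy => min_eq_left ?_
    exact (Set.uIcc_of_le hxb ▸ hy).1
  rw [below, above, integral_id, intervalIntegral.integral_const, smul_eq_mul]
  ring

theorem integral_max_left {a b x : ℝ} (hax : a ≤ x) (hxb : x ≤ b) :
    ∫ y in a..b, max x y = x * (x - a) + (b ^ 2 - x ^ 2) / 2 := by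
  have hsum : ∫ y in a..b, (min x y + max x y) = ∫ y in a..b, (x + y) := by
    simp_rw [min_add_max]
  rw [intervalIntegral.integral_add, intervalIntegral.integral_add, intervalIntegral.integral_const,
    integral_id, integral_min_left hax hxb, smul_eq_mul] at hsum
  · linarith
  all_goals exact Continuous.intervalIntegrable (by fun_prop) _ _

theorem integral_integral_min {a b : ℝ} (hab : a ≤ b) :
    ∫ x in a..b, ∫ y in a..b, min x y = (b - a) ^ 2 * (2 * a + b) / 3 := by
  have inner : ∀ x ∈ Set.uIcc a b, ∫ y in a..b, min x y = b * x - x ^ 2 / 2 - a ^ 2 / 2 := by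
    intro x hx
    rw [Set.uIcc_of_le hab] at hx
    rw [integral_min_left hx.1 hx.2]
    ring
  rw [integral_congr inner, intervalIntegral.integral_sub, intervalIntegral.integral_sub,
    intervalIntegral.integral_const_mul, intervalIntegral.integral_div, integral_pow, integral_id,
    intervalIntegral.integral_const, smul_eq_mul]
  · ring
  all_goals exact Continuous.intervalIntegrable (by fun_prop) _ _

theorem integral_integral_max {a b : ℝ} (hab : a ≤ b) :
    ∫ x in a..b, ∫ y in a..b, max x y = (b - a) ^ 2 * (a + 2 * b) / 3 := by
  have inner : ∀ x ∈ Set.uIcc a b, ∫ y in a..b, max x y = x ^ 2 / 2 - a * x + b ^ 2 / 2 := by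
    intro x hx
    rw [Set.uIcc_of_le hab] at hx
    rw [integral_max_left hx.1 hx.2]
    ring
  rw [integral_congr inner, intervalIntegral.integral_add, intervalIntegral.integral_sub,
    intervalIntegral.integral_const_mul, intervalIntegral.integral_div, integral_pow, integral_id,
    intervalIntegral.integral_const, smul_eq_mul]
  · ring
  all_goals exact Continuous.intervalIntegrable (by fun_prop) _ _

theorem I_mean_bounds_general (M : ℝ → ℝ → ℝ)
    (hMmean : ∀ x y : ℝ, 0 < x → 0 < y → min x y ≤ M x y ∧ M x y ≤ max x y)
    (a b : ℝ) (ha : 0 < a) (hab : a < b)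
    (hint' : ∀ x : ℝ, x ∈ Set.Icc a b → IntervalIntegrable (fun y => M x y) volume a b)
    (hint'' : IntervalIntegrable (fun x => ∫ y in a..b, M x y) volume a b) :
    (2/3) * ((a + b) / 2) < (1 / (b - a)^2) * (∫ x in a..b, ∫ y in a..b, M x y) ∧
    (1 / (b - a)^2) * (∫ x in a..b, ∫ y in a..b, M x y) < (4/3) * ((a + b) / 2) := by
  have hpos : ∀ x ∈ Set.Icc a b, 0 < x := fun x hx => ha.trans_le hx.1
  have lower := integral_integral_mono_on (f := min) hab.le
    (fun x _ => (continuous_const.min continuous_id).intervalIntegrable a b) hint'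
    (intervalIntegrable_integral_of_continuous continuous_min a b) hint''
    fun x hx y hy => (hMmean x y (hpos x hx) (hpos y hy)).1
  have upper := integral_integral_mono_on (g := max) hab.le hint'
    (fun x _ => (continuous_const.max continuous_id).intervalIntegrable a b)
    hint'' (intervalIntegrable_integral_of_continuous continuous_max a b)
    fun x hx y hy => (hMmean x y (hpos x hx) (hpos y hy)).2
  rw [integral_integral_min hab.le] at lower
  rw [integral_integral_max hab.le] at upper
  have hsq : 0 < (b - a) ^ 2 := by positivity
  have gap : 0 < a * (b - a) ^ 2 := by positivity
  rw [one_div, inv_mul_eq_div, lt_div_iff₀ hsq, div_lt_iff₀ hsq]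
  constructor <;> linarith

theorem I_mean_bounds (M : ℝ → ℝ → ℝ)
    (hMmean : ∀ x y : ℝ, 0 < x → 0 < y → min x y ≤ M x y ∧ M x y ≤ max x y)
    (hMsymm : ∀ x y : ℝ, 0 < x → 0 < y → M x y = M y x)
    (a b : ℝ) (ha : 0 < a) (hab : a < b)
    (hint : IntegrableOn (fun p : ℝ × ℝ => M p.1 p.2)
      (Set.Icc a b ×ˢ Set.Icc a b) volume)
    (hint' : ∀ x : ℝ, x ∈ Set.Icc a b → IntervalIntegrable (fun y => M x y) volume a b)
    (hint'' : IntervalIntegrable (fun x => ∫ y in a..b, M x y) volume a b) :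
    (2/3) * ((a + b) / 2) < (1 / (b - a)^2) * (∫ x in a..b, ∫ y in a..b, M x y) ∧
    (1 / (b - a)^2) * (∫ x in a..b, ∫ y in a..b, M x y) < (4/3) * ((a + b) / 2) :=
  I_mean_bounds_general M hMmean a b ha hab hint' hint''
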